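/- arXiv:1303.0529 — 4 statements merged into one kernel-verified Lean document; each statement's English description precedes it below -/
import Mathlib

section
/- Let X and Y be nonnegative random variables defined on the same probability space. Then E[ln(1 + X/(1 + Y))] = ∫₀^∞ (exp(-z)/z)·(E[exp(-z·Y)] − E[exp(-z·(X+Y))]) dz, where both sides are interpreted as values in [0, ∞] (the integrand on the right-hand side is nonnegative for every z > 0). -/
open MeasureTheory Real Set Filter Topology

/-! For each `ω`, Frullani's integral `∫₀^∞ (e^{-az} - e^{-bz}) / z dz = log (b / a)` with
`a = 1 + Y ω` and `b = 1 + X ω + Y ω` turns `log (1 + X ω / (1 + Y ω))` into an integral over `z`,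
whose integrand is `e^{-z} / z · (e^{-zY ω} - e^{-z(X ω + Y ω)}) ≥ 0`. Integrating over `ω` and
exchanging the two integrals (Tonelli) gives the right-hand side. -/

lemma exp_neg_sub_exp_neg_le (a b z : ℝ) :
    exp (-(a * z)) - exp (-(b * z)) ≤ (b - a) * z * exp (-(a * z)) := by
  have h := add_one_le_exp (-((b - a) * z))
  have hb : exp (-(b * z)) = exp (-(a * z)) * exp (-((b - a) * z)) := by
    rw [← exp_add]; ring_nf
  rw [hb]
  nlinarith [exp_pos (-(a * z))]

lemma integrableOn_exp_neg_sub_exp_neg_div {a b : ℝ} (ha : 0 < a) (hab : a ≤ b) :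
    IntegrableOn (fun z ↦ (exp (-(a * z)) - exp (-(b * z))) / z) (Ioi 0) := by
  refine Integrable.mono' ((exp_neg_integrableOn_Ioi 0 ha).const_mul (b - a))
    (by fun_prop : Measurable _).aestronglyMeasurable
    ((ae_restrict_iff' measurableSet_Ioi).2 (ae_of_all _ fun z (hz : 0 < z) ↦ ?_))
  have hnn : 0 ≤ exp (-(a * z)) - exp (-(b * z)) :=
    sub_nonneg.2 (exp_le_exp.2 (by nlinarith))
  rw [norm_of_nonneg (div_nonneg hnn hz.le), div_le_iff₀ hz, neg_mul]
  linarith [exp_neg_sub_exp_neg_le a b z]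

lemma integral_Ioi_exp_neg_sub_exp_neg_div {a b : ℝ} (ha : 0 < a) (hab : a ≤ b) :
    ∫ z in Ioi 0, (exp (-(a * z)) - exp (-(b * z))) / z = log (b / a) := by
  have hcont : Continuous fun x : ℝ ↦ exp (-x) := by fun_prop
  have hL : Tendsto (fun x : ℝ ↦ exp (-x)) (𝓝[>] 0) (𝓝 1) := by
    simpa using (hcont.tendsto 0).mono_left nhdsWithin_le_nhds
  have h := Frullani.integral_Ioi_eq (hcont.locallyIntegrable.locallyIntegrableOn _) ha
    (ha.trans_le hab) hL tendsto_exp_neg_atTop_nhds_zero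
    (by simpa [div_eq_inv_mul] using integrableOn_exp_neg_sub_exp_neg_div ha hab)
  simpa [div_eq_inv_mul] using h

lemma lintegral_Ioi_exp_neg_sub_exp_neg_div {a b : ℝ} (ha : 0 < a) (hab : a ≤ b) :
    ∫⁻ z in Ioi 0, ENNReal.ofReal ((exp (-(a * z)) - exp (-(b * z))) / z)
      = ENNReal.ofReal (log (b / a)) := by
  have hnn : 0 ≤ᵐ[volume.restrict (Ioi 0)] fun z ↦ (exp (-(a * z)) - exp (-(b * z))) / z :=
    (ae_restrict_iff' measurableSet_Ioi).2 (ae_of_all _ fun z (hz : 0 < z) ↦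
      div_nonneg (sub_nonneg.2 (exp_le_exp.2 (by nlinarith))) hz.le)
  rw [← ofReal_integral_eq_lintegral_ofReal (integrableOn_exp_neg_sub_exp_neg_div ha hab) hnn,
    integral_Ioi_exp_neg_sub_exp_neg_div ha hab]

lemma exp_neg_div_mul_sub (z u v : ℝ) :
    exp (-z) / z * (exp (-(z * u)) - exp (-(z * v)))
      = (exp (-((1 + u) * z)) - exp (-((1 + v) * z))) / z := by
  have h (w : ℝ) : exp (-((1 + w) * z)) = exp (-z) * exp (-(z * w)) := by
    rw [← exp_add]; ring_nf
  rw [h, h]; ring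

section

variable {Ω : Type*} [MeasurableSpace Ω] {μ : Measure Ω}

lemma ofReal_mul_integral_sub {f g : Ω → ℝ} (hf : Integrable f μ) (hg : Integrable g μ)
    (hgf : g ≤ᵐ[μ] f) {c : ℝ} (hc : 0 ≤ c) :
    ENNReal.ofReal (c * (∫ ω, f ω ∂μ - ∫ ω, g ω ∂μ))
      = ∫⁻ ω, ENNReal.ofReal (c * (f ω - g ω)) ∂μ := by
  rw [← integral_sub hf hg, ← integral_const_mul,
    ofReal_integral_eq_lintegral_ofReal (f := fun ω ↦ c * (f ω - g ω)) ((hf.sub hg).const_mul c)]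
  filter_upwards [hgf] with ω hω
  exact mul_nonneg hc (sub_nonneg.2 hω)

lemma integrable_exp_neg_mul [IsFiniteMeasure μ] {g : Ω → ℝ} (hg : AEMeasurable g μ)
    (hg0 : 0 ≤ᵐ[μ] g) {z : ℝ} (hz : 0 ≤ z) :
    Integrable (fun ω ↦ exp (-(z * g ω))) μ := by
  simpa only [Pi.neg_apply, mul_neg] using
    ProbabilityTheory.integrable_exp_mul_of_le z 0 hz hg.neg
      (by filter_upwards [hg0] with ω hω using neg_nonpos.2 hω)

end

/-- Hamdi's lemma (N = M = 1), general form: for nonnegative random variables `X`, `Y`,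
`E[ln(1 + X/(1+Y))] = ∫₀^∞ (e^{-z}/z) (E[e^{-zY}] - E[e^{-z(X+Y)}]) dz`,
both sides interpreted in `[0, ∞]`. -/
theorem average_rate_mgf_identity
    {Ω : Type*} [MeasurableSpace Ω] (μ : Measure Ω) [IsProbabilityMeasure μ]
    (X Y : Ω → ℝ) (hX : Measurable X) (hY : Measurable Y)
    (hXnn : ∀ ω, 0 ≤ X ω) (hYnn : ∀ ω, 0 ≤ Y ω) :
    ∫⁻ ω, ENNReal.ofReal (Real.log (1 + X ω / (1 + Y ω))) ∂μ
      = ∫⁻ z in Ioi (0 : ℝ),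
          ENNReal.ofReal ((Real.exp (-z) / z) *
            ((∫ ω, Real.exp (-(z * Y ω)) ∂μ)
              - (∫ ω, Real.exp (-(z * (X ω + Y ω))) ∂μ))) := by
  have hlog (ω : Ω) : log (1 + X ω / (1 + Y ω)) = log ((1 + (X ω + Y ω)) / (1 + Y ω)) := by
    have : 1 + Y ω ≠ 0 := by linarith [hYnn ω]
    field_simp; ring_nf
  calc ∫⁻ ω, ENNReal.ofReal (log (1 + X ω / (1 + Y ω))) ∂μ
      = ∫⁻ ω, (∫⁻ z in Ioi 0, ENNReal.ofReal
          (exp (-z) / z * (exp (-(z * Y ω)) - exp (-(z * (X ω + Y ω)))))) ∂μ := by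
        refine lintegral_congr fun ω ↦ ?_
        simp_rw [exp_neg_div_mul_sub]
        rw [hlog, lintegral_Ioi_exp_neg_sub_exp_neg_div (by linarith [hYnn ω])
          (by linarith [hXnn ω])]
    _ = ∫⁻ z in Ioi 0, ∫⁻ ω, ENNReal.ofReal
          (exp (-z) / z * (exp (-(z * Y ω)) - exp (-(z * (X ω + Y ω))))) ∂μ :=
        lintegral_lintegral_swap (by fun_prop)
    _ = _ := by
        refine (setLIntegral_congr_fun measurableSet_Ioi fun z (hz : 0 < z) ↦ ?_).symm
        have hXY : ∀ ω, 0 ≤ X ω + Y ω := fun ω ↦ add_nonneg (hXnn ω) (hYnn ω)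
        refine ofReal_mul_integral_sub
          (integrable_exp_neg_mul hY.aemeasurable (ae_of_all _ hYnn) hz.le)
          (integrable_exp_neg_mul (hX.add hY).aemeasurable (ae_of_all _ hXY) hz.le)
          (ae_of_all _ fun ω ↦ exp_le_exp.2 ?_) (by positivity)
        simp only [Pi.add_apply]
        nlinarith [hXnn ω]
end

section
/- Let α > 2, let y > 0, and let g be a nonnegative random variable with E[g^{2/α}] < ∞. Then the series T_I(y) := Γ(1 − 2/α)·Σ_{k=0}^∞ y^{k+1}·E[g^{k+1}·exp(-y·g)] / Γ(2 − 2/α + k) converges and satisfies T_I(y) = y^{2/α}·E[g^{2/α}·γ(1 − 2/α, y·g)], where γ is the lower incomplete gamma function. In particular, T_I(y) ≤ y^{2/α}·Γ(1 − 2/α)·E[g^{2/α}] < ∞. -/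
/-! With `P(b, x) = γ(b, x) / Γ(b)`, integration by parts gives
`P(b, x) = x^b e^{-x} / Γ(b + 1) + P(b + 1, x)`, which telescopes into
`γ(a, x) = Γ(a) ∑ₖ x^{a+k} e^{-x} / Γ(a + k + 1)`. For `a = 1 - 2/α` and `x = y g`, multiplying by
`x^{2/α}` turns the `k`-th term into the integrand of the `k`-th summand of `T_I`. All terms are
nonnegative, so monotone convergence exchanges sum and expectation. The bound is `γ(a, x) ≤ Γ(a)`.
-/

open MeasureTheory Real Set

/-- The lower incomplete gamma function `γ(a, x) = ∫₀^x t^{a-1} e^{-t} dt`. -/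
noncomputable def lowerGamma (a x : ℝ) : ℝ :=
  ∫ t in Set.Ioc (0 : ℝ) x, t ^ (a - 1) * Real.exp (-t)

open Filter Topology

section LowerGamma

variable {a x : ℝ}

lemma integrableOn_rpow_mul_exp_neg_Ioc (ha : 0 < a) (x : ℝ) :
    IntegrableOn (fun t : ℝ => t ^ (a - 1) * exp (-t)) (Ioc 0 x) :=
  ((GammaIntegral_convergent ha).mono_set Ioc_subset_Ioi_self).congr_fun
    (fun _ _ => mul_comm _ _) measurableSet_Ioc

lemma rpow_mul_exp_neg_nonneg_ae_Ioi (a : ℝ) :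
    0 ≤ᵐ[volume.restrict (Ioi 0)] fun t : ℝ => t ^ (a - 1) * exp (-t) :=
  (ae_restrict_iff' measurableSet_Ioi).mpr (.of_forall fun t (ht : 0 < t) => by positivity)

lemma lowerGamma_nonneg (a x : ℝ) : 0 ≤ lowerGamma a x :=
  setIntegral_nonneg measurableSet_Ioc fun t ht => by have := ht.1; positivity

lemma lowerGamma_mono (ha : 0 < a) : Monotone (lowerGamma a) := fun _ x₂ h =>
  setIntegral_mono_set (integrableOn_rpow_mul_exp_neg_Ioc ha x₂)
    (ae_restrict_of_ae_restrict_of_subset Ioc_subset_Ioi_self (rpow_mul_exp_neg_nonneg_ae_Ioi a))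
    (Ioc_subset_Ioc_right h).eventuallyLE

lemma lowerGamma_le_Gamma (ha : 0 < a) (x : ℝ) : lowerGamma a x ≤ Gamma a := by
  rw [Gamma_eq_integral ha]
  simp_rw [mul_comm (exp _)]
  exact setIntegral_mono_set
    ((GammaIntegral_convergent ha).congr_fun (fun _ _ => mul_comm _ _) measurableSet_Ioi)
    (rpow_mul_exp_neg_nonneg_ae_Ioi a)
    Ioc_subset_Ioi_self.eventuallyLE

lemma lowerGamma_le_rpow_div (ha : 0 < a) (hx : 0 ≤ x) : lowerGamma a x ≤ x ^ a / a := by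
  have hpow : IntegrableOn (fun t : ℝ => t ^ (a - 1)) (Ioc 0 x) :=
    (intervalIntegral.intervalIntegrable_rpow' (by linarith)).1
  calc lowerGamma a x ≤ ∫ t in Ioc 0 x, t ^ (a - 1) :=
        setIntegral_mono_on (integrableOn_rpow_mul_exp_neg_Ioc ha x) hpow measurableSet_Ioc
          fun t ht => mul_le_of_le_one_right (rpow_nonneg ht.1.le _)
            (exp_le_one_iff.mpr (by linarith [ht.1]))
    _ = x ^ a / a := by
        rw [← intervalIntegral.integral_of_le hx, integral_rpow (.inl (by linarith))]
        simp [zero_rpow ha.ne']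

lemma lowerGamma_add_one (ha : 0 < a) (hx : 0 ≤ x) :
    lowerGamma (a + 1) x = a * lowerGamma a x - x ^ a * exp (-x) := by
  have hint : ∀ {b : ℝ}, 0 < b →
      IntervalIntegrable (fun t : ℝ => t ^ (b - 1) * exp (-t)) volume 0 x := fun hb =>
    (intervalIntegrable_iff_integrableOn_Ioc_of_le hx).mpr (integrableOn_rpow_mul_exp_neg_Ioc hb x)
  have hderiv : ∀ t ∈ Ioo 0 x, HasDerivAt (fun t : ℝ => -(t ^ a * exp (-t)))
      (t ^ (a + 1 - 1) * exp (-t) - a * (t ^ (a - 1) * exp (-t))) t := fun t ht => by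
    have hpow : HasDerivAt (fun t : ℝ => t ^ a) (a * t ^ (a - 1)) t :=
      hasDerivAt_rpow_const (.inl ht.1.ne')
    refine (hpow.mul (hasDerivAt_neg t).exp).neg.congr_deriv ?_
    rw [add_sub_cancel_right]
    ring
  have key := intervalIntegral.integral_eq_sub_of_hasDerivAt_of_le hx
    (by fun_prop (disch := positivity)) hderiv ((hint (by linarith)).sub ((hint ha).const_mul a))
  rw [intervalIntegral.integral_sub (hint (by linarith)) ((hint ha).const_mul a),
    intervalIntegral.integral_const_mul, intervalIntegral.integral_of_le hx,
    intervalIntegral.integral_of_le hx] at key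
  simp only [zero_rpow ha.ne', zero_mul, neg_zero, sub_zero] at key
  rw [lowerGamma, lowerGamma]
  linarith

lemma lowerGamma_div_Gamma_eq_add (ha : 0 < a) (hx : 0 ≤ x) :
    lowerGamma a x / Gamma a =
      x ^ a * exp (-x) / Gamma (a + 1) + lowerGamma (a + 1) x / Gamma (a + 1) := by
  rw [lowerGamma_add_one ha hx, Gamma_add_one ha.ne']
  field_simp [(Gamma_pos_of_pos ha).ne']
  ring

lemma lowerGamma_div_Gamma_eq_sum_add (ha : 0 < a) (hx : 0 ≤ x) (n : ℕ) :
    lowerGamma a x / Gamma a =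
      ∑ k ∈ Finset.range n, x ^ (a + k) * exp (-x) / Gamma (a + k + 1)
        + lowerGamma (a + n) x / Gamma (a + n) := by
  induction n with
  | zero => simp
  | succ n ih =>
    rw [ih, lowerGamma_div_Gamma_eq_add (by positivity) hx, Finset.sum_range_succ, Nat.cast_succ,
      ← add_assoc a]
    ring

lemma hasSum_lowerGamma_div_Gamma (ha : 0 < a) (hx : 0 ≤ x) :
    HasSum (fun k : ℕ => x ^ (a + k) * exp (-x) / Gamma (a + k + 1))
      (lowerGamma a x / Gamma a) := by
  set u : ℕ → ℝ := fun k => x ^ (a + k) * exp (-x) / Gamma (a + k + 1)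
  set R : ℕ → ℝ := fun n => lowerGamma (a + n) x / Gamma (a + n)
  have hu : ∀ k, 0 ≤ u k := fun k => by
    have := Gamma_pos_of_pos (show 0 < a + k + 1 by positivity)
    positivity
  have hR : ∀ n, 0 ≤ R n := fun n =>
    div_nonneg (lowerGamma_nonneg _ _) (Gamma_pos_of_pos (by positivity)).le
  have hsum : ∀ n, ∑ k ∈ Finset.range n, u k = lowerGamma a x / Gamma a - R n := fun n => by
    rw [lowerGamma_div_Gamma_eq_sum_add ha hx n]
    ring
  -- `γ(b, x) ≤ x ^ b / b` bounds the remainder by `e ^ x` times the next term of the series.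
  have hRu : ∀ n, R n ≤ exp x * u n := fun n => by
    have hb : 0 < a + n := by positivity
    calc R n ≤ x ^ (a + n) / (a + n) / Gamma (a + n) :=
          div_le_div_of_nonneg_right (lowerGamma_le_rpow_div hb hx) (Gamma_pos_of_pos hb).le
      _ = exp x * u n := by
          simp only [u]
          rw [Gamma_add_one hb.ne', div_div, ← mul_div_assoc, ← mul_assoc, mul_comm (exp x),
            mul_assoc, ← exp_add, add_neg_cancel, exp_zero, mul_one]
  have hu_summable : Summable u :=
    summable_of_sum_range_le (c := lowerGamma a x / Gamma a) hu fun n => by linarith [hsum n, hR n]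
  have hR_tendsto : Tendsto R atTop (𝓝 0) := by
    refine squeeze_zero hR hRu ?_
    simpa using hu_summable.tendsto_atTop_zero.const_mul (exp x)
  rw [hasSum_iff_tendsto_nat_of_nonneg hu, funext hsum]
  simpa using tendsto_const_nhds.sub hR_tendsto

lemma hasSum_rpow_mul_lowerGamma (ha : 0 < a) (hx : 0 ≤ x) :
    HasSum (fun k : ℕ => Gamma a * x ^ (k + 1) * exp (-x) / Gamma (a + k + 1))
      (x ^ (1 - a) * lowerGamma a x) := by
  have h := (hasSum_lowerGamma_div_Gamma ha hx).mul_left (Gamma a * x ^ (1 - a))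
  rw [show Gamma a * x ^ (1 - a) * (lowerGamma a x / Gamma a) = x ^ (1 - a) * lowerGamma a x by
    field_simp [(Gamma_pos_of_pos ha).ne']] at h
  refine h.congr_fun fun k => ?_
  have hpow : x ^ (k + 1) = x ^ (1 - a) * x ^ (a + k) := by
    rw [← rpow_add' hx (by ring_nf; positivity), ← rpow_natCast]
    push_cast
    ring_nf
  rw [hpow]
  ring

end LowerGamma

theorem hasSum_integral_of_nonneg {α : Type*} [MeasurableSpace α] {μ : Measure α}
    {f : ℕ → α → ℝ} {F : α → ℝ} (hf : ∀ n, AEStronglyMeasurable (f n) μ) (hF : Integrable F μ)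
    (hf_nonneg : ∀ n, 0 ≤ᵐ[μ] f n) (hf_sum : ∀ᵐ x ∂μ, HasSum (f · x) (F x)) :
    HasSum (fun n => ∫ x, f n x ∂μ) (∫ x, F x ∂μ) := by
  have hf_nonneg' : ∀ᵐ x ∂μ, ∀ n, 0 ≤ f n x := ae_all_iff.mpr hf_nonneg
  have hf_int : ∀ n, Integrable (f n) μ := fun n => hF.mono' (hf n) <| by
    filter_upwards [hf_nonneg', hf_sum] with x hx hsum
    rw [norm_of_nonneg (hx n)]
    exact le_hasSum hsum n fun k _ => hx k
  rw [hasSum_iff_tendsto_nat_of_nonneg fun n => integral_nonneg_of_ae (hf_nonneg n)]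
  simp_rw [← integral_finsetSum _ fun n _ => hf_int n]
  refine integral_tendsto_of_tendsto_of_monotone (fun n => integrable_finsetSum _ fun k _ => hf_int k)
    hF ?_ (hf_sum.mono fun x hx => hx.tendsto_sum_nat)
  filter_upwards [hf_nonneg'] with x hx
  exact monotone_nat_of_le_succ fun n => by
    rw [Finset.sum_range_succ]
    exact le_add_of_nonneg_right (hx n)

theorem TI_series_eq_lowerGamma_expectation_general
    {Ω : Type*} [MeasurableSpace Ω] (μ : Measure Ω)
    (α y : ℝ) (hα : 2 < α) (hy : 0 < y)
    (g : Ω → ℝ) (hg : Measurable g) (hgnn : ∀ ω, 0 ≤ g ω)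
    (hgint : Integrable (fun ω => g ω ^ (2 / α)) μ) :
    HasSum (fun k : ℕ =>
        Real.Gamma (1 - 2 / α) * y ^ (k + 1) *
          (∫ ω, g ω ^ (k + 1) * Real.exp (-(y * g ω)) ∂μ) /
          Real.Gamma (2 - 2 / α + (k : ℝ)))
      (y ^ (2 / α) * ∫ ω, g ω ^ (2 / α) * lowerGamma (1 - 2 / α) (y * g ω) ∂μ)
    ∧ y ^ (2 / α) * (∫ ω, g ω ^ (2 / α) * lowerGamma (1 - 2 / α) (y * g ω) ∂μ)
        ≤ y ^ (2 / α) * Real.Gamma (1 - 2 / α) * ∫ ω, g ω ^ (2 / α) ∂μ := by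
  have ha : 0 < 1 - 2 / α := by
    have : 2 / α < 1 := (div_lt_one (by linarith)).mpr hα
    linarith
  set S : Ω → ℝ := fun ω => g ω ^ (2 / α) * lowerGamma (1 - 2 / α) (y * g ω)
  have hS_le : ∀ ω, S ω ≤ Gamma (1 - 2 / α) * g ω ^ (2 / α) := fun ω => by
    rw [mul_comm (Gamma _)]
    exact mul_le_mul_of_nonneg_left (lowerGamma_le_Gamma ha _) (rpow_nonneg (hgnn ω) _)
  have hS_int : Integrable S μ :=
    hgint.mul_bdd ((lowerGamma_mono ha).measurable.comp (hg.const_mul y)).aestronglyMeasurable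
      (.of_forall fun ω => (norm_of_nonneg (lowerGamma_nonneg _ _)).trans_le
        (lowerGamma_le_Gamma ha _))
  set c : ℕ → ℝ := fun k => Gamma (1 - 2 / α) * y ^ (k + 1) / Gamma (2 - 2 / α + k)
  have hS_series : ∀ ω, HasSum (fun k => c k * (g ω ^ (k + 1) * exp (-(y * g ω))))
      (y ^ (2 / α) * S ω) := fun ω => by
    have h := hasSum_rpow_mul_lowerGamma ha (mul_nonneg hy.le (hgnn ω))
    rw [sub_sub_cancel, mul_rpow hy.le (hgnn ω), mul_assoc] at h
    refine h.congr_fun fun k => ?_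
    rw [show 1 - 2 / α + k + 1 = 2 - 2 / α + k by ring, mul_pow]
    ring
  have hc : ∀ k, 0 ≤ c k := fun k => by
    have := Gamma_pos_of_pos (show 0 < 2 - 2 / α + k by linarith [k.cast_nonneg (α := ℝ)])
    positivity
  have h := hasSum_integral_of_nonneg (fun k => (by fun_prop : Measurable _).aestronglyMeasurable)
    (hS_int.const_mul _) (fun k => .of_forall fun ω =>
      mul_nonneg (hc k) (mul_nonneg (pow_nonneg (hgnn ω) _) (exp_pos _).le)) (.of_forall hS_series)
  simp only [integral_const_mul] at h
  refine ⟨h.congr_fun fun k => by ring, ?_⟩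
  calc y ^ (2 / α) * ∫ ω, S ω ∂μ ≤ y ^ (2 / α) * ∫ ω, Gamma (1 - 2 / α) * g ω ^ (2 / α) ∂μ :=
        mul_le_mul_of_nonneg_left (integral_mono hS_int (hgint.const_mul _) hS_le)
          (rpow_nonneg hy.le _)
    _ = _ := by rw [integral_const_mul, mul_assoc]

/-- The series form of the interference correction term `T_I(y)` converges to the
lower-incomplete-gamma expectation form, and is bounded by
`y^{2/α} Γ(1 - 2/α) E[g^{2/α}]`. -/
theorem TI_series_eq_lowerGamma_expectation
    {Ω : Type*} [MeasurableSpace Ω] (μ : Measure Ω) [IsProbabilityMeasure μ]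
    (α y : ℝ) (hα : 2 < α) (hy : 0 < y)
    (g : Ω → ℝ) (hg : Measurable g) (hgnn : ∀ ω, 0 ≤ g ω)
    (hgint : Integrable (fun ω => g ω ^ (2 / α)) μ) :
    HasSum (fun k : ℕ =>
        Real.Gamma (1 - 2 / α) * y ^ (k + 1) *
          (∫ ω, g ω ^ (k + 1) * Real.exp (-(y * g ω)) ∂μ) /
          Real.Gamma (2 - 2 / α + (k : ℝ)))
      (y ^ (2 / α) * ∫ ω, g ω ^ (2 / α) * lowerGamma (1 - 2 / α) (y * g ω) ∂μ)
    ∧ y ^ (2 / α) * (∫ ω, g ω ^ (2 / α) * lowerGamma (1 - 2 / α) (y * g ω) ∂μ)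
        ≤ y ^ (2 / α) * Real.Gamma (1 - 2 / α) * ∫ ω, g ω ^ (2 / α) ∂μ :=
  TI_series_eq_lowerGamma_expectation_general μ α y hα hy g hg hgnn hgint
end

section
/- (Proposition 1.) Let α > 2, m > 0, Ω > 0, and let g be a Gamma-distributed random variable with probability density f(x) = (m/Ω)^m·x^{m-1}·exp(-m·x/Ω)/Γ(m) on (0, ∞) (Nakagami-m fading power gain). Then for every y > 0, the series T_I(y) := Γ(1 − 2/α)·Σ_{k=0}^∞ y^{k+1}·E[g^{k+1}·exp(-y·g)] / Γ(2 − 2/α + k) converges and equals m·(m/Ω)^m·(1 − 2/α)^{-1}·y·(y + m/Ω)^{-(m+1)}·₂F₁(m+1, 1; 2 − 2/α; y/(y + m/Ω)), where for |x| < 1, ₂F₁(a, 1; c; x) = Σ_{k=0}^∞ (Γ(a+k)·Γ(c)/(Γ(a)·Γ(c+k)))·x^k denotes the Gauss hypergeometric series (which converges here since 0 < y/(y + m/Ω) < 1). -/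
/-!
For `g ~ Gamma(m, Ω)` with rate `r = m/Ω`, the moment `E[g^(k+1) e^(-y g)]` is a Gamma integral,
equal to `r^m Γ(m+k+1) / (Γ(m) (y+r)^(m+k+1))`. Using `Γ(m+1) = m Γ(m)` and
`Γ(2 - 2/α) = (1 - 2/α) Γ(1 - 2/α)`, the `k`-th term of `T_I(y)` becomes a fixed factor times the
`k`-th term of `₂F₁(m+1, 1; 2-2/α; y/(y+r))`, whose consecutive terms have ratio
`(m+1+k)/(2-2/α+k) · y/(y+r) → y/(y+r) < 1`.
-/

open MeasureTheory Real Set Filter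

/-- The `k`-th term of the Gauss series `₂F₁(a, 1; c; x)`. -/
noncomputable def hypergeomTerm (a c x : ℝ) (k : ℕ) : ℝ :=
  Gamma (a + k) * Gamma c / (Gamma a * Gamma (c + k)) * x ^ k

lemma hypergeomTerm_succ {a c : ℝ} (ha : 0 < a) (hc : 0 < c) (x : ℝ) (k : ℕ) :
    hypergeomTerm a c x (k + 1) = (a + k) / (c + k) * x * hypergeomTerm a c x k := by
  have hGa : Gamma (a + (k + 1 : ℕ)) = (a + k) * Gamma (a + k) := by
    rw [Nat.cast_succ, ← add_assoc, Gamma_add_one (by positivity)]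
  have hGc : Gamma (c + (k + 1 : ℕ)) = (c + k) * Gamma (c + k) := by
    rw [Nat.cast_succ, ← add_assoc, Gamma_add_one (by positivity)]
  have : Gamma a ≠ 0 := (Gamma_pos_of_pos ha).ne'
  have : Gamma (c + k) ≠ 0 := (Gamma_pos_of_pos (by positivity)).ne'
  have : c + k ≠ 0 := by positivity
  simp only [hypergeomTerm, hGa, hGc]
  field_simp
  ring

lemma summable_hypergeomTerm {a c x : ℝ} (ha : 0 < a) (hc : 0 < c) (hx : |x| < 1) :
    Summable (hypergeomTerm a c x) := by
  have hlim : Tendsto (fun k : ℕ => (a + k) / (c + k) * |x|) atTop (nhds |x|) := by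
    simpa using (tendsto_add_mul_div_add_mul_atTop_nhds a c 1 one_ne_zero).mul_const |x|
  refine summable_of_ratio_norm_eventually_le (r := (1 + |x|) / 2) (by linarith) ?_
  filter_upwards [hlim.eventually (ge_mem_nhds (by linarith : |x| < (1 + |x|) / 2))] with k hk
  rw [hypergeomTerm_succ ha hc, norm_mul, norm_mul, Real.norm_eq_abs, Real.norm_eq_abs,
    abs_of_pos (by positivity : 0 < (a + k) / (c + k))]
  exact mul_le_mul_of_nonneg_right hk (norm_nonneg _)

lemma integral_pow_mul_exp_mul_gamma_density {a r y : ℝ} (ha : 0 < a) (hyr : 0 < y + r) (n : ℕ) :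
    ∫ x in Ioi (0 : ℝ), x ^ n * exp (-(y * x)) * (r ^ a * x ^ (a - 1) * exp (-(r * x)) / Gamma a)
      = r ^ a / Gamma a * ((y + r) ^ (-(a + n)) * Gamma (a + n)) := by
  have hint := integral_rpow_mul_exp_neg_mul_Ioi (by positivity : 0 < a + n) hyr
  rw [one_div, inv_rpow hyr.le, ← rpow_neg hyr.le] at hint
  rw [← hint, ← integral_const_mul]
  refine setIntegral_congr_fun measurableSet_Ioi fun x (hx : 0 < x) => ?_
  have hpow : x ^ n * x ^ (a - 1) = x ^ (a + n - 1) := by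
    rw [← rpow_natCast, ← rpow_add hx]; ring_nf
  have hexp : exp (-(y * x)) * exp (-(r * x)) = exp (-((y + r) * x)) := by
    rw [← exp_add]; ring_nf
  calc x ^ n * exp (-(y * x)) * (r ^ a * x ^ (a - 1) * exp (-(r * x)) / Gamma a)
      = r ^ a / Gamma a * ((x ^ n * x ^ (a - 1)) * (exp (-(y * x)) * exp (-(r * x)))) := by ring
    _ = _ := by rw [hpow, hexp]

lemma gamma_mul_moment_div_gamma_eq {a b r y : ℝ} (ha : 0 < a) (hb : 0 < b) (hyr : 0 < y + r)
    (k : ℕ) :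
    Gamma b * y ^ (k + 1) *
        (∫ x in Ioi (0 : ℝ), x ^ (k + 1) * exp (-(y * x)) *
          (r ^ a * x ^ (a - 1) * exp (-(r * x)) / Gamma a)) / Gamma (b + 1 + k)
      = a * r ^ a * b⁻¹ * y * (y + r) ^ (-(a + 1)) *
          hypergeomTerm (a + 1) (b + 1) (y / (y + r)) k := by
  have hpow : (y + r) ^ (-(a + (k + 1 : ℕ))) = (y + r) ^ (-(a + 1)) / (y + r) ^ k := by
    rw [← rpow_natCast, ← rpow_sub hyr]; push_cast; ring_nf
  have hGa : Gamma (a + 1) = a * Gamma a := Gamma_add_one ha.ne'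
  have hGb : Gamma (b + 1) = b * Gamma b := Gamma_add_one hb.ne'
  have : Gamma a ≠ 0 := (Gamma_pos_of_pos ha).ne'
  have : Gamma (b + 1 + k) ≠ 0 := (Gamma_pos_of_pos (by positivity)).ne'
  rw [integral_pow_mul_exp_mul_gamma_density ha hyr, hpow, hypergeomTerm, div_pow, hGa, hGb,
    Nat.cast_succ, ← add_assoc, add_right_comm a]
  field_simp
  ring

/-- Proposition 1: for a Gamma(m, Ω) distributed power gain (Nakagami-m fading),
the interference correction series `T_I(y)` converges and admits the closed form
`m (m/Ω)^m (1 - 2/α)⁻¹ y (y + m/Ω)^{-(m+1)} ₂F₁(m+1, 1; 2 - 2/α; y/(y + m/Ω))`,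
where the Gauss hypergeometric series (which converges since `0 < y/(y + m/Ω) < 1`)
is written out as a sum. -/
theorem TI_closed_form_nakagami
    (α m Om y : ℝ) (hα : 2 < α) (hm : 0 < m) (hOm : 0 < Om) (hy : 0 < y) :
    Summable (fun k : ℕ =>
        Real.Gamma (m + 1 + (k : ℝ)) * Real.Gamma (2 - 2 / α) /
          (Real.Gamma (m + 1) * Real.Gamma (2 - 2 / α + (k : ℝ))) *
          (y / (y + m / Om)) ^ k)
    ∧ HasSum (fun k : ℕ =>
        Real.Gamma (1 - 2 / α) * y ^ (k + 1) *
          (∫ x in Set.Ioi (0 : ℝ), x ^ (k + 1) * Real.exp (-(y * x)) *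
            ((m / Om) ^ m * x ^ (m - 1) * Real.exp (-(m * x / Om)) / Real.Gamma m)) /
          Real.Gamma (2 - 2 / α + (k : ℝ)))
      (m * (m / Om) ^ m * (1 - 2 / α)⁻¹ * y * (y + m / Om) ^ (-(m + 1)) *
        ∑' k : ℕ,
          Real.Gamma (m + 1 + (k : ℝ)) * Real.Gamma (2 - 2 / α) /
            (Real.Gamma (m + 1) * Real.Gamma (2 - 2 / α + (k : ℝ))) *
            (y / (y + m / Om)) ^ k) := by
  have hb : 0 < 1 - 2 / α := by
    have : 2 / α < 1 := (div_lt_one (by linarith)).mpr hα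
    linarith
  have hyr : 0 < y + m / Om := by positivity
  have hx : |y / (y + m / Om)| < 1 := by
    rw [abs_of_pos (div_pos hy hyr), div_lt_one hyr]
    linarith [div_pos hm hOm]
  have hsum := summable_hypergeomTerm (by linarith : 0 < m + 1) (by linarith : 0 < 1 - 2 / α + 1) hx
  rw [show (2 : ℝ) - 2 / α = 1 - 2 / α + 1 by ring]
  refine ⟨hsum, ?_⟩
  simp only [mul_div_right_comm m _ Om, gamma_mul_moment_div_gamma_eq hm hb hyr]
  exact hsum.hasSum.mul_left _
end

section
/- (Remark 0 / equation (9A).) Fix α > 2 and SNR > 0. Let X and g be nonnegative random variables with X integrable and E[g^{2/α}] < ∞. Set M₀(z) = E[exp(-z·X)], M_I(z) = E[exp(-z·g)], T_I(z) = z^{2/α}·E[g^{2/α}·γ(1 − 2/α, z·g)], and Z_I(z) = M_I(z) + T_I(z) > 0. For λ > 0 define the average rate R(λ) = ∫₀^∞ (1 − M₀(SNR·y))·(G_I(y, λ)/y) dy, where G_I(y, λ) = Z_I(SNR·y)^{-1} − (α/2)·(y/Z_I(SNR·y))·∫₀^∞ ξ^{α/2−1}·exp(-π·λ·Z_I(SNR·y)·ξ)·exp(-y·ξ^{α/2})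 dξ (all integrals valued in [0, ∞]). Then: (i) λ ↦ R(λ) is monotonically nondecreasing on (0, ∞); (ii) for every λ > 0, R(λ) ≤ R^{(λ∞)} := ∫₀^∞ (1 − M₀(z))/(z·Z_I(z)) dz; and (iii) lim_{λ→∞} R(λ) = R^{(λ∞)} (equality in [0, ∞]). In particular, the limiting value R^{(λ∞)} does not depend on λ and, after the change of variable z = SNR·y, is independent of the base-station density. -/
/-!
The density `λ` enters `G_I(y, λ)` only through the Laplace transform, at
`b = π λ Z_I(SNR·y)`, of `ξ ↦ ξ^{α/2-1} e^{-y ξ^{α/2}}`; this transform is nonnegative,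
decreasing in `b`, and tends to `0` as `b → ∞` by dominated convergence. Hence the integrand
of `R(λ)` increases with `λ` to `(1 - M₀(SNR·y)) / (y Z_I(SNR·y))`, and monotone convergence
gives the limit. The substitution `z = SNR·y`, which leaves `dz / z` invariant, turns it into
`R^{(λ∞)}`.
-/

open MeasureTheory Real Set Filter
open scoped ENNReal

open scoped Topology

@[fun_prop]
theorem measurable_integral_of_measurable_uncurry {α β : Type*} [MeasurableSpace α]
    [MeasurableSpace β] {ν : Measure β} [SFinite ν] {f : α → β → ℝ}
    (hf : Measurable fun q : α × β => f q.1 q.2) : Measurable fun x => ∫ y, f x y ∂ν :=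
  hf.stronglyMeasurable.integral_prod_right.measurable

@[fun_prop]
theorem measurable_lowerGamma (a : ℝ) : Measurable (lowerGamma a) := by
  have hset : MeasurableSet {q : ℝ × ℝ | q.2 ∈ Ioc 0 q.1} :=
    (measurableSet_lt measurable_const measurable_snd).inter
      (measurableSet_le measurable_snd measurable_fst)
  have hind : Measurable fun q : ℝ × ℝ =>
      (Ioc 0 q.1).indicator (fun t => t ^ (a - 1) * exp (-t)) q.2 :=
    Measurable.indicator (f := fun q : ℝ × ℝ => q.2 ^ (a - 1) * exp (-q.2)) (by fun_prop) hset
  have hdef : lowerGamma a =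
      fun x => ∫ t, (Ioc 0 x).indicator (fun t => t ^ (a - 1) * exp (-t)) t :=
    funext fun x => (integral_indicator measurableSet_Ioc).symm
  rw [hdef]
  exact measurable_integral_of_measurable_uncurry
    (f := fun x t => (Ioc 0 x).indicator (fun t => t ^ (a - 1) * exp (-t)) t) hind

theorem integral_exp_neg_mul_le_one {Ω : Type*} [MeasurableSpace Ω] {μ : Measure Ω}
    [IsProbabilityMeasure μ] {X : Ω → ℝ} (hX : ∀ ω, 0 ≤ X ω) {z : ℝ} (hz : 0 ≤ z) :
    ∫ ω, exp (-(z * X ω)) ∂μ ≤ 1 := by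
  have hbound : ∀ ω, ‖exp (-(z * X ω))‖ ≤ 1 := fun ω => by
    rw [norm_of_nonneg (exp_pos _).le, exp_le_one_iff, neg_nonpos]
    exact mul_nonneg hz (hX ω)
  simpa using
    (le_abs_self _).trans (norm_integral_le_of_norm_le_const (μ := μ) (ae_of_all _ hbound))

theorem lintegral_Ioi_comp_mul_left (f : ℝ → ℝ≥0∞) {c : ℝ} (hc : 0 < c) :
    ∫⁻ y in Ioi 0, f (c * y) = ENNReal.ofReal c⁻¹ * ∫⁻ z in Ioi 0, f z := by
  have he : MeasurableEmbedding (c * ·) := (Homeomorph.mulLeft₀ c hc.ne').measurableEmbedding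
  have hpre : (c * ·) ⁻¹' Ioi 0 = Ioi (0 : ℝ) := by
    ext y; exact mul_pos_iff_of_pos_left hc
  nth_rw 1 [← hpre]
  rw [← he.lintegral_map, ← he.restrict_map, Real.map_volume_mul_left hc.ne',
    Measure.restrict_smul, lintegral_smul_measure, abs_of_pos (inv_pos.2 hc), smul_eq_mul]

/-- The measure `dz / z` on `(0, ∞)` is invariant under dilations. -/
theorem lintegral_Ioi_ofReal_div_comp_mul_left (f : ℝ → ℝ) {c : ℝ} (hc : 0 < c) :
    ∫⁻ y in Ioi 0, ENNReal.ofReal (f (c * y) / y) =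
      ∫⁻ z in Ioi 0, ENNReal.ofReal (f z / z) := by
  calc ∫⁻ y in Ioi 0, ENNReal.ofReal (f (c * y) / y)
      = ∫⁻ y in Ioi 0, ENNReal.ofReal c * ENNReal.ofReal (f (c * y) / (c * y)) := by
        refine setLIntegral_congr_fun measurableSet_Ioi fun y (hy : 0 < y) => ?_
        rw [← ENNReal.ofReal_mul hc.le]
        congr 1
        field_simp
    _ = ∫⁻ z in Ioi 0, ENNReal.ofReal (f z / z) := by
        rw [lintegral_const_mul' _ _ ENNReal.ofReal_ne_top,
          lintegral_Ioi_comp_mul_left (fun z => ENNReal.ofReal (f z / z)) hc, ← mul_assoc,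
          ← ENNReal.ofReal_mul hc.le, mul_inv_cancel₀ hc.ne', ENNReal.ofReal_one, one_mul]

noncomputable def laplaceRpowExp (s p y b : ℝ) : ℝ :=
  ∫ ξ in Ioi 0, ξ ^ s * exp (-(b * ξ)) * exp (-(y * ξ ^ p))

section laplaceRpowExp

variable {s p y : ℝ}

theorem laplaceRpowExp_nonneg (s p y b : ℝ) : 0 ≤ laplaceRpowExp s p y b :=
  setIntegral_nonneg measurableSet_Ioi fun ξ (hξ : 0 < ξ) => by positivity

theorem integrableOn_laplaceRpowExp (hs : -1 < s) (hy : 0 ≤ y) {b : ℝ} (hb : 0 < b) :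
    IntegrableOn (fun ξ => ξ ^ s * exp (-(b * ξ)) * exp (-(y * ξ ^ p))) (Ioi 0) := by
  have hdom : IntegrableOn (fun ξ : ℝ => ξ ^ s * exp (-(b * ξ))) (Ioi 0) := by
    simpa only [rpow_one, neg_mul] using integrableOn_rpow_mul_exp_neg_mul_rpow hs one_pos hb
  refine hdom.mono' (by fun_prop) ((ae_restrict_iff' measurableSet_Ioi).2 (ae_of_all _ ?_))
  intro ξ (hξ : 0 < ξ)
  rw [norm_of_nonneg (by positivity)]
  refine mul_le_of_le_one_right (by positivity) (exp_le_one_iff.2 (neg_nonpos.2 ?_))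
  positivity

theorem laplaceRpowExp_antitoneOn (hs : -1 < s) (hy : 0 ≤ y) :
    AntitoneOn (laplaceRpowExp s p y) (Ioi 0) := fun b (hb : 0 < b) b' (hb' : 0 < b') hbb' =>
  setIntegral_mono_on (integrableOn_laplaceRpowExp hs hy hb')
    (integrableOn_laplaceRpowExp hs hy hb) measurableSet_Ioi fun ξ (hξ : 0 < ξ) => by gcongr

theorem tendsto_laplaceRpowExp_atTop (hs : -1 < s) (hy : 0 ≤ y) :
    Tendsto (laplaceRpowExp s p y) atTop (𝓝 0) := by
  have hlim : ∀ ξ : ℝ, 0 < ξ →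
      Tendsto (fun b => ξ ^ s * exp (-(b * ξ)) * exp (-(y * ξ ^ p))) atTop (𝓝 0) :=
    fun ξ hξ => by
    have hexp := tendsto_exp_atBot.comp (tendsto_neg_atTop_atBot.comp
      (tendsto_id.atTop_mul_const hξ))
    simpa using (hexp.const_mul (ξ ^ s)).mul_const (exp (-(y * ξ ^ p)))
  have hdom := tendsto_integral_filter_of_dominated_convergence (μ := volume.restrict (Ioi 0))
    (l := atTop) (f := fun _ => 0) _ (Eventually.of_forall fun b => by fun_prop)
    ((eventually_ge_atTop 1).mono fun b (hb : 1 ≤ b) =>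
      (ae_restrict_iff' measurableSet_Ioi).2 (ae_of_all _ fun ξ (hξ : 0 < ξ) => ?_))
    (integrableOn_laplaceRpowExp (p := p) hs hy one_pos)
    ((ae_restrict_iff' measurableSet_Ioi).2 (ae_of_all _ hlim))
  · rw [integral_zero] at hdom
    exact hdom
  · rw [norm_of_nonneg (by positivity)]
    gcongr

theorem measurable_laplaceRpowExp :
    Measurable fun q : ℝ × ℝ => laplaceRpowExp s p q.1 q.2 :=
  measurable_integral_of_measurable_uncurry (by fun_prop)

end laplaceRpowExp

theorem MonotoneOn.tendsto_atTop_of_tendsto_nat_add_one {α : Type*} [TopologicalSpace α]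
    [Preorder α] [OrderTopology α] {f : ℝ → α} {L : α} (hf : MonotoneOn f (Ioi 0))
    (h : Tendsto (fun n : ℕ => f (n + 1)) atTop (𝓝 L)) : Tendsto f atTop (𝓝 L) := by
  have hnat : Tendsto (fun n : ℕ => f n) atTop (𝓝 L) :=
    (tendsto_add_atTop_iff_nat 1).1 (by simpa only [Nat.cast_add, Nat.cast_one] using h)
  refine tendsto_of_tendsto_of_tendsto_of_le_of_le' (hnat.comp tendsto_nat_floor_atTop)
    (hnat.comp tendsto_nat_ceil_atTop) ?_ ?_ <;>
    filter_upwards [eventually_ge_atTop 1] with t ht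
  · have hfloor : (0 : ℝ) < ⌊t⌋₊ := by exact_mod_cast Nat.floor_pos.2 ht
    exact hf hfloor (hfloor.trans_le (Nat.floor_le (by linarith))) (Nat.floor_le (by linarith))
  · have hceil : (0 : ℝ) < ⌈t⌉₊ := by linarith [Nat.le_ceil t]
    exact hf (show (0 : ℝ) < t by linarith) hceil (Nat.le_ceil t)

theorem tendsto_lintegral_atTop_of_monotoneOn {β : Type*} [MeasurableSpace β] {μ : Measure β}
    {F : ℝ → β → ℝ≥0∞} {L : β → ℝ≥0∞} (hF : ∀ t, AEMeasurable (F t) μ)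
    (hmono : ∀ᵐ x ∂μ, MonotoneOn (F · x) (Ioi 0))
    (hlim : ∀ᵐ x ∂μ, Tendsto (F · x) atTop (𝓝 (L x))) :
    Tendsto (fun t => ∫⁻ x, F t x ∂μ) atTop (𝓝 (∫⁻ x, L x ∂μ)) := by
  have hpos : ∀ n : ℕ, (0 : ℝ) < n + 1 := fun n => by positivity
  refine MonotoneOn.tendsto_atTop_of_tendsto_nat_add_one
    (fun s hs t ht hst => lintegral_mono_ae (hmono.mono fun x hx => hx hs ht hst)) ?_
  refine lintegral_tendsto_of_tendsto_of_monotone (fun n => hF _) ?_ ?_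
  · filter_upwards [hmono] with x hx n m hnm
    exact hx (hpos n) (hpos m) (by gcongr)
  · filter_upwards [hlim] with x hx
    exact hx.comp (tendsto_atTop_add_const_right atTop 1 tendsto_natCast_atTop_atTop)

/-- `rateWeight α (Z_I(SNR·y)) y λ` is the factor `G_I(y, λ)` of the average rate. -/
noncomputable def rateWeight (α Z y lam : ℝ) : ℝ :=
  Z⁻¹ - (α / 2) * (y / Z) * laplaceRpowExp (α / 2 - 1) (α / 2) y (π * lam * Z)

section rateWeight

variable {α Z y : ℝ}

theorem rateWeight_le_inv (hα : 0 ≤ α) (hy : 0 ≤ y) (hZ : 0 ≤ Z) (lam : ℝ) :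
    rateWeight α Z y lam ≤ Z⁻¹ :=
  sub_le_self _ (mul_nonneg (by positivity) (laplaceRpowExp_nonneg _ _ _ _))

theorem rateWeight_monotoneOn (hα : 0 < α) (hy : 0 ≤ y) (hZ : 0 < Z) :
    MonotoneOn (rateWeight α Z y) (Ioi 0) :=
  fun l₁ (h₁ : 0 < l₁) l₂ (h₂ : 0 < l₂) h₁₂ => by
  have hs : -1 < α / 2 - 1 := by linarith
  refine sub_le_sub_left (mul_le_mul_of_nonneg_left ?_ (by positivity)) _
  exact laplaceRpowExp_antitoneOn hs hy (by positivity : (0 : ℝ) < π * l₁ * Z)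
    (by positivity : (0 : ℝ) < π * l₂ * Z) (by gcongr)

theorem tendsto_rateWeight_atTop (hα : 0 < α) (hy : 0 ≤ y) (hZ : 0 < Z) :
    Tendsto (rateWeight α Z y) atTop (𝓝 Z⁻¹) := by
  have hs : -1 < α / 2 - 1 := by linarith
  have hb : Tendsto (fun lam => π * lam * Z) atTop atTop :=
    (tendsto_id.const_mul_atTop pi_pos).atTop_mul_const hZ
  have h := (((tendsto_laplaceRpowExp_atTop (p := α / 2) hs hy).comp hb).const_mul
    (α / 2 * (y / Z))).const_sub Z⁻¹
  rw [mul_zero, sub_zero] at h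
  exact h

theorem measurable_rateWeight {Z : ℝ → ℝ} (hZ : Measurable Z) (lam : ℝ) :
    Measurable fun y => rateWeight α (Z y) y lam := by
  have hK : Measurable fun y => laplaceRpowExp (α / 2 - 1) (α / 2) y (π * lam * Z y) :=
    measurable_laplaceRpowExp.comp (measurable_id.prodMk (by fun_prop))
  unfold rateWeight
  fun_prop

end rateWeight

/-- The paper's `R(λ)` is `averageRate α a Z λ` with `a y = 1 - M₀(SNR·y)` and
`Z y = Z_I(SNR·y)`. -/
noncomputable def averageRate (α : ℝ) (a Z : ℝ → ℝ) (lam : ℝ) : ℝ≥0∞ :=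
  ∫⁻ y in Ioi 0, ENNReal.ofReal (a y * (rateWeight α (Z y) y lam / y))

section averageRate

variable {α : ℝ} {a Z : ℝ → ℝ}

theorem averageRate_le (hα : 0 ≤ α) (ha : ∀ y, 0 < y → 0 ≤ a y) (hZ : ∀ y, 0 ≤ Z y)
    (lam : ℝ) :
    averageRate α a Z lam ≤ ∫⁻ y in Ioi 0, ENNReal.ofReal (a y * ((Z y)⁻¹ / y)) := by
  refine setLIntegral_mono' measurableSet_Ioi fun y (hy : 0 < y) => ?_
  have := ha y hy
  gcongr
  exact rateWeight_le_inv hα hy.le (hZ y) lam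

theorem averageRate_monotoneOn (hα : 0 < α) (ha : ∀ y, 0 < y → 0 ≤ a y)
    (hZ : ∀ y, 0 < Z y) : MonotoneOn (averageRate α a Z) (Ioi 0) :=
  fun l₁ h₁ l₂ h₂ h₁₂ => setLIntegral_mono' measurableSet_Ioi fun y (hy : 0 < y) => by
    have := ha y hy
    gcongr
    exact rateWeight_monotoneOn hα hy.le (hZ y) h₁ h₂ h₁₂

theorem tendsto_averageRate_atTop (hα : 0 < α) (ha_meas : Measurable a)
    (ha : ∀ y, 0 < y → 0 ≤ a y) (hZ_meas : Measurable Z) (hZ : ∀ y, 0 < Z y) :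
    Tendsto (averageRate α a Z) atTop
      (𝓝 (∫⁻ y in Ioi 0, ENNReal.ofReal (a y * ((Z y)⁻¹ / y)))) := by
  refine tendsto_lintegral_atTop_of_monotoneOn
    (fun lam => by
      have := measurable_rateWeight (α := α) hZ_meas lam
      exact Measurable.aemeasurable (by fun_prop))
    ((ae_restrict_iff' measurableSet_Ioi).2 (ae_of_all _ fun y (hy : 0 < y) => ?_))
    ((ae_restrict_iff' measurableSet_Ioi).2 (ae_of_all _ fun y (hy : 0 < y) => ?_))
  · intro l₁ h₁ l₂ h₂ h₁₂
    have := ha y hy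
    dsimp only
    gcongr
    exact rateWeight_monotoneOn hα hy.le (hZ y) h₁ h₂ h₁₂
  · exact ENNReal.tendsto_ofReal
      (((tendsto_rateWeight_atTop hα hy.le (hZ y)).div_const y).const_mul (a y))

end averageRate

theorem average_rate_monotone_and_dense_limit_general
    {Ω : Type*} [MeasurableSpace Ω] (μ : Measure Ω) [IsProbabilityMeasure μ]
    (α SNR : ℝ) (hα : 2 < α) (hSNR : 0 < SNR)
    (X g : Ω → ℝ) (hX : Measurable X) (hg : Measurable g)
    (hXnn : ∀ ω, 0 ≤ X ω)
    (M₀ MI TI ZI : ℝ → ℝ)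
    (hM₀ : ∀ z, M₀ z = ∫ ω, Real.exp (-(z * X ω)) ∂μ)
    (hMI : ∀ z, MI z = ∫ ω, Real.exp (-(z * g ω)) ∂μ)
    (hTI : ∀ z, TI z = z ^ (2 / α) * ∫ ω, g ω ^ (2 / α) * lowerGamma (1 - 2 / α) (z * g ω) ∂μ)
    (hZI : ∀ z, ZI z = MI z + TI z)
    (hZpos : ∀ z, 0 < ZI z)
    (GI : ℝ → ℝ → ℝ)
    (hGI : ∀ y lam, GI y lam = (ZI (SNR * y))⁻¹ - (α / 2) * (y / ZI (SNR * y)) *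
        ∫ ξ in Set.Ioi (0 : ℝ),
          ξ ^ (α / 2 - 1) * Real.exp (-(π * lam * ZI (SNR * y) * ξ)) *
            Real.exp (-(y * ξ ^ (α / 2))))
    (R : ℝ → ℝ≥0∞)
    (hR : ∀ lam, R lam = ∫⁻ y in Set.Ioi (0 : ℝ),
        ENNReal.ofReal ((1 - M₀ (SNR * y)) * (GI y lam / y))) :
    (∀ lam₁ lam₂ : ℝ, 0 < lam₁ → lam₁ ≤ lam₂ → R lam₁ ≤ R lam₂)
    ∧ (∀ lam : ℝ, 0 < lam →
        R lam ≤ ∫⁻ z in Set.Ioi (0 : ℝ), ENNReal.ofReal ((1 - M₀ z) / (z * ZI z)))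
    ∧ Tendsto R atTop
        (nhds (∫⁻ z in Set.Ioi (0 : ℝ), ENNReal.ofReal ((1 - M₀ z) / (z * ZI z)))) := by
  have hα₀ : 0 < α := by linarith
  have hM₀_meas : Measurable M₀ := by rw [funext hM₀]; fun_prop
  have hZI_meas : Measurable ZI := by rw [funext hZI, funext hMI, funext hTI]; fun_prop
  have ha : ∀ y, 0 < y → 0 ≤ 1 - M₀ (SNR * y) := fun y hy =>
    sub_nonneg.2 ((hM₀ _).trans_le (integral_exp_neg_mul_le_one hXnn (by positivity)))
  have hR_eq : R = averageRate α (fun y => 1 - M₀ (SNR * y)) (fun y => ZI (SNR * y)) := by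
    funext lam
    simp only [hR, hGI]
    rfl
  have hlimit :
      ∫⁻ y in Ioi 0, ENNReal.ofReal ((1 - M₀ (SNR * y)) * ((ZI (SNR * y))⁻¹ / y)) =
        ∫⁻ z in Ioi 0, ENNReal.ofReal ((1 - M₀ z) / (z * ZI z)) := by
    convert lintegral_Ioi_ofReal_div_comp_mul_left (fun z => (1 - M₀ z) * (ZI z)⁻¹) hSNR
      using 4 <;> ring
  rw [hR_eq, ← hlimit]
  exact ⟨fun l₁ l₂ h₁ h₁₂ => averageRate_monotoneOn hα₀ ha (fun y => hZpos _) h₁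
      (h₁.trans_le h₁₂) h₁₂,
    fun lam _ => averageRate_le hα₀.le ha (fun y => (hZpos _).le) lam,
    tendsto_averageRate_atTop hα₀ (by fun_prop) ha (by fun_prop) fun y => hZpos _⟩

/-- Remark 0 / equation (9A): the single-tier average rate `R(λ)` is nondecreasing in the
base-station density `λ`, is bounded above by `R^{(λ∞)} = ∫₀^∞ (1 - M₀(z))/(z Z_I(z)) dz`,
and tends to this bound as `λ → ∞`. -/
theorem average_rate_monotone_and_dense_limit
    {Ω : Type*} [MeasurableSpace Ω] (μ : Measure Ω) [IsProbabilityMeasure μ]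
    (α SNR : ℝ) (hα : 2 < α) (hSNR : 0 < SNR)
    (X g : Ω → ℝ) (hX : Measurable X) (hg : Measurable g)
    (hXnn : ∀ ω, 0 ≤ X ω) (hgnn : ∀ ω, 0 ≤ g ω)
    (hXint : Integrable X μ) (hgint : Integrable (fun ω => g ω ^ (2 / α)) μ)
    (M₀ MI TI ZI : ℝ → ℝ)
    (hM₀ : ∀ z, M₀ z = ∫ ω, Real.exp (-(z * X ω)) ∂μ)
    (hMI : ∀ z, MI z = ∫ ω, Real.exp (-(z * g ω)) ∂μ)
    (hTI : ∀ z, TI z = z ^ (2 / α) * ∫ ω, g ω ^ (2 / α) * lowerGamma (1 - 2 / α) (z * g ω) ∂μ)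
    (hZI : ∀ z, ZI z = MI z + TI z)
    (hZpos : ∀ z, 0 < ZI z)
    (GI : ℝ → ℝ → ℝ)
    (hGI : ∀ y lam, GI y lam = (ZI (SNR * y))⁻¹ - (α / 2) * (y / ZI (SNR * y)) *
        ∫ ξ in Set.Ioi (0 : ℝ),
          ξ ^ (α / 2 - 1) * Real.exp (-(π * lam * ZI (SNR * y) * ξ)) *
            Real.exp (-(y * ξ ^ (α / 2))))
    (R : ℝ → ℝ≥0∞)
    (hR : ∀ lam, R lam = ∫⁻ y in Set.Ioi (0 : ℝ),
        ENNReal.ofReal ((1 - M₀ (SNR * y)) * (GI y lam / y))) :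
    (∀ lam₁ lam₂ : ℝ, 0 < lam₁ → lam₁ ≤ lam₂ → R lam₁ ≤ R lam₂)
    ∧ (∀ lam : ℝ, 0 < lam →
        R lam ≤ ∫⁻ z in Set.Ioi (0 : ℝ), ENNReal.ofReal ((1 - M₀ z) / (z * ZI z)))
    ∧ Tendsto R atTop
        (nhds (∫⁻ z in Set.Ioi (0 : ℝ), ENNReal.ofReal ((1 - M₀ z) / (z * ZI z)))) :=
  average_rate_monotone_and_dense_limit_general μ α SNR hα hSNR X g hX hg hXnn M₀ MI TI ZI hM₀ hMI
    hTI hZI hZpos GI hGI R hR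
end
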